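/- arXiv:1911.09621 — 3 statements merged into one kernel-verified Lean document; each statement's English description precedes it below -/
import Mathlib

section
/- Fix k ∈ ℤ, k ≠ 0, and a nondegenerate triangle K ⊂ {(r,z) : r > 0} with edges e₁,e₂,e₃ and outward unit normals n₁,n₂,n₃. The four linear functionals σ_K(u) = (1/|K|)∫_K (k u_θ − u_r)/r dA and σ_{eᵢ}(u) = ∫_{eᵢ}(u_r,u_z)·nᵢ ds (i = 1,2,3) form a unisolvent set of degrees of freedom on the 4-dimensional polynomial space C₁ = {(kγ₁ + γ₂r, γ₁ + γ₃r, γ₄ + γ₂z) : γᵢ ∈ ℝ}; i.e., the map u ↦ (σ_K(u), σ_{e₁}(u), σ_{e₂}(u), σ_{e₃}(u)) is a linear isomorphism from C₁ to ℝ⁴. -/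
/-!
For `u ∈ C₁` the integrand of `σ_K` is the constant `kγ₃ − γ₂`, and `(u_r, u_z)` is the
Raviart–Thomas field `w(p) = (kγ₁, γ₄) + γ₂ • p`, whose normal component is constant along
each edge; so `σ_{eᵢ}(u) = |eᵢ| · w(vᵢ) · nᵢ` for either endpoint `vᵢ` of `eᵢ`. If all four
degrees of freedom vanish, then at every vertex `w` is orthogonal to the normals of the two
adjacent, non-parallel edges, hence vanishes; vanishing at two distinct vertices forces `γ₂ = 0`,
then `kγ₁ = γ₄ = 0`, and `σ_K = 0` gives `γ₃ = 0`. An injective linear endomorphism of `ℝ⁴` is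
bijective.
-/

open MeasureTheory

theorem cross_ne_zero_of_linearIndependent {d e : ℝ × ℝ} (h : LinearIndependent ℝ ![d, e]) :
    d.1 * e.2 - d.2 * e.1 ≠ 0 := by
  intro hde
  have key := LinearIndependent.pair_iff.mp h
  obtain ⟨he₁, hd₁⟩ := key e.1 (-d.1)
    (Prod.ext (by simp; ring) (by simp; linear_combination -hde))
  obtain ⟨he₂, hd₂⟩ := key e.2 (-d.2)
    (Prod.ext (by simp; linear_combination hde) (by simp; ring))
  have hd : d = 0 := Prod.ext (neg_eq_zero.mp hd₁) (neg_eq_zero.mp hd₂)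
  exact one_ne_zero (key 1 0 (by simp [hd])).1

theorem AffineIndependent.linearIndependent_sub_sub {k V : Type*} [CommRing k] [AddCommGroup V]
    [Module k V] {a : Fin 3 → V} (ha : AffineIndependent k a) :
    LinearIndependent k ![a 1 - a 0, a 2 - a 0] := by
  refine LinearIndependent.pair_iff.mpr fun s t hst => ?_
  have hw := affineIndependent_iff.mp ha Finset.univ ![-(s + t), s, t]
    (by simp [Fin.sum_univ_three])
    (by rw [Fin.sum_univ_three, ← hst]; simp only [Matrix.cons_val]; module)
  exact ⟨hw 1 (Finset.mem_univ _), hw 2 (Finset.mem_univ _)⟩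

theorem sq_add_sq_ne_zero_of_ne_zero {v : ℝ × ℝ} (hv : v ≠ 0) : v.1 ^ 2 + v.2 ^ 2 ≠ 0 := by
  contrapose! hv
  obtain ⟨h₁, h₂⟩ := (add_eq_zero_iff_of_nonneg (sq_nonneg _) (sq_nonneg _)).mp hv
  exact Prod.ext (pow_eq_zero_iff two_ne_zero |>.mp h₁) (pow_eq_zero_iff two_ne_zero |>.mp h₂)

theorem cross_eq_zero_of_perp {w d n : ℝ × ℝ} (hn : n ≠ 0)
    (hwn : w.1 * n.1 + w.2 * n.2 = 0) (hnd : n.1 * d.1 + n.2 * d.2 = 0) :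
    w.1 * d.2 - w.2 * d.1 = 0 := by
  refine (mul_eq_zero.mp ?_).resolve_right (sq_add_sq_ne_zero_of_ne_zero hn)
  linear_combination (d.2 * n.1 - d.1 * n.2) * hwn + (w.1 * n.2 - w.2 * n.1) * hnd

theorem eq_zero_of_cross_eq_zero {w d e : ℝ × ℝ} (hd : w.1 * d.2 - w.2 * d.1 = 0)
    (he : w.1 * e.2 - w.2 * e.1 = 0) (hde : d.1 * e.2 - d.2 * e.1 ≠ 0) : w = 0 := by
  refine Prod.ext ((mul_eq_zero.mp (?_ : w.1 * _ = 0)).resolve_right hde)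
    ((mul_eq_zero.mp (?_ : w.2 * _ = 0)).resolve_right hde)
  · linear_combination d.1 * he - e.1 * hd
  · linear_combination d.2 * he - e.2 * hd

theorem integral_normal_raviartThomas_segment (c : ℝ × ℝ) (β : ℝ) {p d n : ℝ × ℝ}
    (hnd : n.1 * d.1 + n.2 * d.2 = 0) :
    ∫ t in (0:ℝ)..1, ((c + β • (p + t • d)).1 * n.1 + (c + β • (p + t • d)).2 * n.2)
      = (c + β • p).1 * n.1 + (c + β • p).2 * n.2 := by
  have hconst : ∀ t : ℝ, (c + β • (p + t • d)).1 * n.1 + (c + β • (p + t • d)).2 * n.2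
      = (c + β • p).1 * n.1 + (c + β • p).2 * n.2 := fun t => by
    simp only [Prod.fst_add, Prod.snd_add, Prod.smul_fst, Prod.smul_snd, smul_eq_mul]
    linear_combination β * t * hnd
  simp only [hconst, intervalIntegral.integral_const, sub_zero, one_smul]

theorem raviartThomas_eq_zero_of_flux_eq_zero {a n : Fin 3 → ℝ × ℝ} (ha : AffineIndependent ℝ a)
    (hn : ∀ i, n i ≠ 0)
    (hperp : ∀ i, (n i).1 * (a (i + 2) - a (i + 1)).1 + (n i).2 * (a (i + 2) - a (i + 1)).2 = 0)
    {c : ℝ × ℝ} {β : ℝ}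
    (hflux : ∀ i, (c + β • a (i + 1)).1 * (n i).1 + (c + β • a (i + 1)).2 * (n i).2 = 0) :
    c = 0 ∧ β = 0 := by
  have hflux' : ∀ i, (c + β • a (i + 2)).1 * (n i).1 + (c + β • a (i + 2)).2 * (n i).2 = 0 :=
    fun i => by
      have hp := hperp i
      have hf := hflux i
      simp only [Prod.fst_add, Prod.snd_add, Prod.smul_fst, Prod.smul_snd, smul_eq_mul,
        Prod.fst_sub, Prod.snd_sub] at hp hf ⊢
      linear_combination hf + β * hp
  have hcross := cross_ne_zero_of_linearIndependent ha.linearIndependent_sub_sub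
  have hw₀ : c + β • a 0 = 0 := eq_zero_of_cross_eq_zero
    (cross_eq_zero_of_perp (hn 1) (hflux' 1) (hperp 1))
    (cross_eq_zero_of_perp (hn 2) (hflux 2) (hperp 2))
    (by convert hcross using 1; simp; ring)
  have hw₁ : c + β • a 1 = 0 := eq_zero_of_cross_eq_zero
    (cross_eq_zero_of_perp (hn 2) (hflux' 2) (hperp 2))
    (cross_eq_zero_of_perp (hn 0) (hflux 0) (hperp 0))
    (by convert hcross using 1; simp; ring)
  have hβ : β = 0 := by
    have : β • (a 0 - a 1) = 0 := by rw [smul_sub, sub_eq_zero, ← add_right_inj c, hw₀, hw₁]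
    exact (smul_eq_zero.mp this).resolve_right (sub_ne_zero.mpr (ha.injective.ne (by decide)))
  subst hβ
  simpa using hw₀

theorem measure_convexHull_pos_of_affineSpan_eq_top {V : Type*} [NormedAddCommGroup V]
    [NormedSpace ℝ V] [FiniteDimensional ℝ V] [MeasurableSpace V] (μ : Measure V)
    [μ.IsOpenPosMeasure] {s : Set V} (hs : affineSpan ℝ s = ⊤) :
    0 < μ (convexHull ℝ s) :=
  (isOpen_interior.measure_pos μ
    (interior_convexHull_nonempty_iff_affineSpan_eq_top.mpr hs)).trans_le
      (measure_mono interior_subset)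

theorem setIntegral_div_measureReal_eq_of_eqOn {α : Type*} [MeasurableSpace α] {μ : Measure α}
    {s : Set α} (hs : MeasurableSet s) (h₀ : μ s ≠ 0) (hfin : μ s ≠ ⊤) {f : α → ℝ} {c : ℝ}
    (hf : Set.EqOn f (fun _ => c) s) : (∫ x in s, f x ∂μ) / μ.real s = c := by
  rw [setIntegral_congr_fun hs hf, setIntegral_const, smul_eq_mul,
    mul_div_cancel_left₀ _ ((measureReal_ne_zero_iff hfin).mpr h₀)]

theorem IsLinearMap.bijective_of_map_eq_zero {K V : Type*} [Field K] [AddCommGroup V]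
    [Module K V] [FiniteDimensional K V] {f : V → V} (hf : IsLinearMap K f)
    (h : ∀ x, f x = 0 → x = 0) : Function.Bijective f :=
  have hinj : Function.Injective (hf.mk' f) := (injective_iff_map_eq_zero _).mpr h
  ⟨hinj, LinearMap.injective_iff_surjective.mp hinj⟩

theorem stmt_8_general (k : ℤ) (hk : k ≠ 0) (a : Fin 3 → ℝ × ℝ)
    (haff : AffineIndependent ℝ a)
    (hpos : ∀ p ∈ convexHull ℝ (Set.range a), 0 < p.1)
    (n : Fin 3 → ℝ × ℝ)
    (hunit : ∀ i, (n i).1 ^ 2 + (n i).2 ^ 2 = 1)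
    (hperp : ∀ i,
      (n i).1 * (a (i + 2) - a (i + 1)).1 + (n i).2 * (a (i + 2) - a (i + 1)).2 = 0) :
    let K : Set (ℝ × ℝ) := convexHull ℝ (Set.range a)
    let C1 : (ℝ × ℝ × ℝ × ℝ) → (ℝ × ℝ) → ℝ × ℝ × ℝ := fun γ p =>
      ((k : ℝ) * γ.1 + γ.2.1 * p.1, γ.1 + γ.2.2.1 * p.1, γ.2.2.2 + γ.2.1 * p.2)
    let len : Fin 3 → ℝ := fun i =>
      Real.sqrt ((a (i + 2) - a (i + 1)).1 ^ 2 + (a (i + 2) - a (i + 1)).2 ^ 2)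
    let σe : (ℝ × ℝ × ℝ × ℝ) → Fin 3 → ℝ := fun γ i =>
      (∫ t in (0:ℝ)..1,
          ((C1 γ (a (i + 1) + t • (a (i + 2) - a (i + 1)))).1 * (n i).1
            + (C1 γ (a (i + 1) + t • (a (i + 2) - a (i + 1)))).2.2 * (n i).2)) * len i
    let σK : (ℝ × ℝ × ℝ × ℝ) → ℝ := fun γ =>
      (∫ p in K, ((k : ℝ) * (C1 γ p).2.1 - (C1 γ p).1) / p.1) / (volume K).toReal
    let Φ : (ℝ × ℝ × ℝ × ℝ) → ℝ × ℝ × ℝ × ℝ := fun γ => (σK γ, σe γ 0, σe γ 1, σe γ 2)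
    IsLinearMap ℝ Φ ∧ Function.Bijective Φ := by
  intro K C1 len σe σK Φ
  have hKc : IsCompact K := (Set.finite_range a).isCompact_convexHull ℝ
  have hKpos : 0 < volume K := measure_convexHull_pos_of_affineSpan_eq_top volume
    (haff.affineSpan_eq_top_iff_card_eq_finrank_add_one.mpr (by simp))
  have hσK : ∀ γ, σK γ = k * γ.2.2.1 - γ.2.1 := fun γ =>
    setIntegral_div_measureReal_eq_of_eqOn hKc.isClosed.measurableSet hKpos.ne'
      hKc.measure_lt_top.ne fun p hp => by
        have hr := (hpos p hp).ne'
        simp only [C1]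
        field_simp
        ring
  have hσe : ∀ γ i, σe γ i = ((((k : ℝ) * γ.1, γ.2.2.2) + γ.2.1 • a (i + 1)).1 * (n i).1
      + (((k : ℝ) * γ.1, γ.2.2.2) + γ.2.1 • a (i + 1)).2 * (n i).2) * len i := fun γ i =>
    congrArg (· * len i) <| integral_normal_raviartThomas_segment ((k : ℝ) * γ.1, γ.2.2.2) γ.2.1
      (p := a (i + 1)) (hperp i)
  have hlen : ∀ i, len i ≠ 0 := fun i =>
    (Real.sqrt_ne_zero (by positivity)).mpr
      (sq_add_sq_ne_zero_of_ne_zero (sub_ne_zero.mpr (haff.injective.ne (by simp))))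
  have hlin : IsLinearMap ℝ Φ := by
    constructor <;> intros <;> simp only [Φ, hσK, hσe] <;> ext <;>
      simp only [Prod.fst_add, Prod.snd_add, Prod.smul_fst, Prod.smul_snd, smul_eq_mul] <;> ring
  refine ⟨hlin, hlin.bijective_of_map_eq_zero fun γ hγ => ?_⟩
  simp only [Φ, hσK, hσe, Prod.mk_eq_zero, mul_eq_zero, hlen, or_false] at hγ
  obtain ⟨hK, h₀, h₁, h₂⟩ := hγ
  obtain ⟨hc, hβ⟩ := raviartThomas_eq_zero_of_flux_eq_zero haff
    (fun i h => by simpa [h] using hunit i) hperp (by intro i; fin_cases i <;> assumption)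
  have hk' : (k : ℝ) ≠ 0 := Int.cast_ne_zero.mpr hk
  simp only [Prod.mk_eq_zero, mul_eq_zero, hk', false_or] at hc
  rw [hβ, sub_zero, mul_eq_zero, or_iff_right hk'] at hK
  exact Prod.ext hc.1 (Prod.ext hβ (Prod.ext hK hc.2))

/-- unisolvence of the degrees of freedom
σ_K(u) = (1/|K|)∫_K (k u_θ − u_r)/r dA and σ_{eᵢ}(u) = ∫_{eᵢ}(u_r,u_z)·nᵢ ds
on the 4-dimensional local space C₁ = {(kγ₁ + γ₂r, γ₁ + γ₃r, γ₄ + γ₂z)}: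
the DOF map is a linear isomorphism from C₁ (≅ ℝ⁴ via coefficients) onto ℝ⁴. -/
theorem stmt_8 (k : ℤ) (hk : k ≠ 0) (a : Fin 3 → ℝ × ℝ)
    (haff : AffineIndependent ℝ a)
    (hpos : ∀ p ∈ convexHull ℝ (Set.range a), 0 < p.1)
    (n : Fin 3 → ℝ × ℝ)
    (hunit : ∀ i, (n i).1 ^ 2 + (n i).2 ^ 2 = 1)
    (hperp : ∀ i,
      (n i).1 * (a (i + 2) - a (i + 1)).1 + (n i).2 * (a (i + 2) - a (i + 1)).2 = 0)
    (hout : ∀ i,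
      (n i).1 * (a i - a (i + 1)).1 + (n i).2 * (a i - a (i + 1)).2 < 0) :
    let K : Set (ℝ × ℝ) := convexHull ℝ (Set.range a)
    let C1 : (ℝ × ℝ × ℝ × ℝ) → (ℝ × ℝ) → ℝ × ℝ × ℝ := fun γ p =>
      ((k : ℝ) * γ.1 + γ.2.1 * p.1, γ.1 + γ.2.2.1 * p.1, γ.2.2.2 + γ.2.1 * p.2)
    let len : Fin 3 → ℝ := fun i =>
      Real.sqrt ((a (i + 2) - a (i + 1)).1 ^ 2 + (a (i + 2) - a (i + 1)).2 ^ 2)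
    let σe : (ℝ × ℝ × ℝ × ℝ) → Fin 3 → ℝ := fun γ i =>
      (∫ t in (0:ℝ)..1,
          ((C1 γ (a (i + 1) + t • (a (i + 2) - a (i + 1)))).1 * (n i).1
            + (C1 γ (a (i + 1) + t • (a (i + 2) - a (i + 1)))).2.2 * (n i).2)) * len i
    let σK : (ℝ × ℝ × ℝ × ℝ) → ℝ := fun γ =>
      (∫ p in K, ((k : ℝ) * (C1 γ p).2.1 - (C1 γ p).1) / p.1) / (volume K).toReal
    let Φ : (ℝ × ℝ × ℝ × ℝ) → ℝ × ℝ × ℝ × ℝ := fun γ => (σK γ, σe γ 0, σe γ 1, σe γ 2)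
    IsLinearMap ℝ Φ ∧ Function.Bijective Φ :=
  stmt_8_general k hk a haff hpos n hunit hperp
end

section
/- Let Λ: V → V be a bounded, symmetric, positive-definite linear operator on a finite-dimensional inner product space V, and let V = Σ_{j=1}^N V_j be a decomposition into subspaces. Suppose (1) stable decomposition: every v ∈ V admits v = Σ v_j with v_j ∈ V_j and Σ_j ⟨Λv_j, v_j⟩ ≤ C₁⟨Λv, v⟩; and (2) limited interaction: Σ_{j,m} |⟨Λv_j, w_m⟩| ≤ C₂ (Σ_j⟨Λv_j,v_j⟩)^{1/2} (Σ_m⟨Λw_m,w_m⟩)^{1/2} for all v_j ∈ V_j, w_m ∈ V_m. Let P_j denote the Λ-orthogonal projection onto V_j and E = (I − P_N)(I − P_{N−1})⋯(I − P_1). Then there exists δ < 1 depending only on C₁ and C₂ such that ⟨ΛEv, Ev⟩ ≤ δ ⟨Λv, v⟩ for all v ∈ V. -/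
/-!
Let `B x y = ⟪Λ x, y⟫`, let `u k = (1 - P (k-1)) ⋯ (1 - P 0) v` be the iterates of the sweep and
`p j = P j (u j)` its corrections. Each step is a `B`-orthogonal projection, so the energy drops
by exactly `B (p j) (p j)` and `B v v - B (E v) (E v) = ∑ j, B (p j) (p j) =: S`. Testing `v`
against a stable decomposition `v = ∑ j, v j` gives
`B v v = ∑ j, B (v j) (p j) + ∑ j, B (v j) (p 0 + ⋯ + p (j-1))`; Cauchy–Schwarz bounds the first
sum and limited interaction the second, so `B v v ≤ (1 + C₂) √(C₁ B v v) √S`, i.e. `B v v ≤ K S`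
with `K = C₁ (1 + C₂)²`. Hence `B (E v) (E v) ≤ K / (1 + K) * B v v`.
-/

open Finset

namespace LinearMap.BilinForm

variable {V : Type*} [AddCommGroup V] [Module ℝ V] {B : LinearMap.BilinForm ℝ V}

theorem apply_le_sqrt_mul_sqrt (hB : ∀ x, 0 ≤ B x x) (hBs : B.IsSymm) (x y : V) :
    B x y ≤ √(B x x) * √(B y y) := by
  rw [← Real.sqrt_mul (hB x)]
  exact (le_abs_self _).trans <| Real.abs_le_sqrt <|
    apply_sq_le_of_symm B hB (isSymm_iff.1 hBs) x y

theorem sum_apply_le_sqrt_mul_sqrt (hB : ∀ x, 0 ≤ B x x) (hBs : B.IsSymm) {ι : Type*}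
    (s : Finset ι) (x y : ι → V) :
    ∑ i ∈ s, B (x i) (y i) ≤
      √(∑ i ∈ s, B (x i) (x i)) * √(∑ i ∈ s, B (y i) (y i)) :=
  calc ∑ i ∈ s, B (x i) (y i) ≤ ∑ i ∈ s, √(B (x i) (x i)) * √(B (y i) (y i)) :=
        sum_le_sum fun i _ => apply_le_sqrt_mul_sqrt hB hBs _ _
    _ ≤ _ := by
      simpa only [Real.sq_sqrt (hB _)] using
        Real.sum_mul_le_sqrt_mul_sqrt s (fun i => √(B (x i) (x i))) (fun i => √(B (y i) (y i)))

theorem apply_sub_sub_of_apply_sub_eq_zero (hBs : B.IsSymm) {x q : V} (h : B (x - q) q = 0) :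
    B (x - q) (x - q) = B x x - B q q := by
  have := hBs.eq q x
  simp only [map_sub, LinearMap.sub_apply] at h ⊢
  linarith

end LinearMap.BilinForm

theorem le_mul_sq_mul_of_le_mul_sqrt_mul_sqrt {T A S C c : ℝ} (hA : 0 ≤ A) (hS : 0 ≤ S)
    (hC : 0 ≤ C) (hAT : A ≤ C * T) (hT : T ≤ c * √A * √S) : T ≤ C * c ^ 2 * S := by
  by_contra! h
  have hT0 : 0 < T := h.trans_le' (by positivity)
  have hsq : T ^ 2 ≤ c ^ 2 * A * S := by
    calc T ^ 2 ≤ (c * √A * √S) ^ 2 := pow_le_pow_left₀ hT0.le hT 2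
      _ = c ^ 2 * A * S := by rw [mul_pow, mul_pow, Real.sq_sqrt hA, Real.sq_sqrt hS]
  nlinarith [mul_le_mul_of_nonneg_left hAT (by positivity : 0 ≤ c ^ 2 * S)]

namespace MultiplicativeSchwarz

variable {V : Type*} [AddCommGroup V] [Module ℝ V] {N : ℕ}

/-- `partialError P k = (1 - P (k-1)) ⋯ (1 - P 0)`, the full error operator once `N ≤ k`. -/
def partialError (P : Fin N → Module.End ℝ V) (k : ℕ) : Module.End ℝ V :=
  ((List.ofFn fun j => 1 - P j).take k).reverse.prod

def correction (P : Fin N → Module.End ℝ V) (v : V) (j : Fin N) : V :=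
  P j (partialError P j v)

section PartialError

variable (P : Fin N → Module.End ℝ V)

@[simp]
theorem partialError_zero : partialError P 0 = 1 := by
  simp [partialError]

theorem partialError_succ {k : ℕ} (hk : k < N) :
    partialError P (k + 1) = (1 - P ⟨k, hk⟩) * partialError P k := by
  simp [partialError, List.take_add_one, hk]

theorem partialError_self :
    partialError P N = ((List.ofFn fun j => 1 - P j).reverse).prod := by
  rw [partialError, List.take_of_length_le (by simp)]

theorem partialError_succ_apply (v : V) (j : Fin N) :
    partialError P (j + 1) v = partialError P j v - correction P v j := by
  simp [partialError_succ P j.2, correction]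

end PartialError

section Conditions

variable (B : LinearMap.BilinForm ℝ V)

structure IsOrthogonalProjection (W : Submodule ℝ V) (P : Module.End ℝ V) : Prop where
  mem : ∀ v, P v ∈ W
  apply_sub_eq_zero : ∀ v, ∀ w ∈ W, B (v - P v) w = 0

def HasStableDecomposition (W : Fin N → Submodule ℝ V) (C : ℝ) : Prop :=
  ∀ v, ∃ vj : Fin N → V, (∀ j, vj j ∈ W j) ∧ v = ∑ j, vj j ∧
    ∑ j, B (vj j) (vj j) ≤ C * B v v

def HasLimitedInteraction (W : Fin N → Submodule ℝ V) (C : ℝ) : Prop :=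
  ∀ vj wj : Fin N → V, (∀ j, vj j ∈ W j) → (∀ j, wj j ∈ W j) →
    ∑ j, ∑ m, |B (vj j) (wj m)| ≤
      C * √(∑ j, B (vj j) (vj j)) * √(∑ m, B (wj m) (wj m))

end Conditions

section Sweep

variable {B : LinearMap.BilinForm ℝ V} {W : Fin N → Submodule ℝ V}
  {P : Fin N → Module.End ℝ V}

theorem apply_partialError_succ (hBs : B.IsSymm) (hP : ∀ j, IsOrthogonalProjection B (W j) (P j))
    (v : V) (j : Fin N) :
    B (partialError P (j + 1) v) (partialError P (j + 1) v) =
      B (partialError P j v) (partialError P j v) - B (correction P v j) (correction P v j) := by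
  rw [partialError_succ_apply]
  exact LinearMap.BilinForm.apply_sub_sub_of_apply_sub_eq_zero hBs <|
    (hP j).apply_sub_eq_zero _ _ ((hP j).mem _)

theorem sum_apply_correction (hBs : B.IsSymm) (hP : ∀ j, IsOrthogonalProjection B (W j) (P j))
    (v : V) :
    ∑ j, B (correction P v j) (correction P v j) =
      B v v - B (partialError P N v) (partialError P N v) := by
  set f : ℕ → ℝ := fun k => B (partialError P k v) (partialError P k v)
  calc ∑ j, B (correction P v j) (correction P v j) = ∑ j : Fin N, (f j - f (j + 1)) :=
        sum_congr rfl fun j _ => by simp only [f, apply_partialError_succ hBs hP]; ring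
    _ = f 0 - f N := by rw [Fin.sum_univ_eq_sum_range (fun k => f k - f (k + 1)), sum_range_sub']
    _ = _ := by simp [f]

theorem apply_sub_partialError_le (x v : V) {k : ℕ} (hk : k ≤ N) :
    B x (v - partialError P k v) ≤ ∑ m, |B x (correction P v m)| := by
  set u : ℕ → V := fun k => partialError P k v
  have hu : v - u k = ∑ i ∈ range k, (u i - u (i + 1)) := by
    rw [sum_range_sub' u]; simp [u]
  calc B x (v - u k) = ∑ i ∈ range k, B x (u i - u (i + 1)) := by rw [hu, map_sum]
    _ ≤ ∑ i ∈ range k, |B x (u i - u (i + 1))| := sum_le_sum fun i _ => le_abs_self _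
    _ ≤ ∑ i ∈ range N, |B x (u i - u (i + 1))| :=
        sum_le_sum_of_subset_of_nonneg (range_subset_range.2 hk) fun i _ _ => abs_nonneg _
    _ = ∑ m, |B x (correction P v m)| := by
        rw [← Fin.sum_univ_eq_sum_range (fun i => |B x (u i - u (i + 1))|)]
        simp [u, partialError_succ_apply]

theorem apply_self_le_one_add_mul_sqrt_mul_sqrt (hB : ∀ x, 0 ≤ B x x) (hBs : B.IsSymm)
    (hP : ∀ j, IsOrthogonalProjection B (W j) (P j)) {C : ℝ}
    (hint : HasLimitedInteraction B W C)
    {v : V} {vj : Fin N → V} (hvj : ∀ j, vj j ∈ W j) (hv : v = ∑ j, vj j) :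
    B v v ≤ (1 + C) * √(∑ j, B (vj j) (vj j)) *
      √(∑ j, B (correction P v j) (correction P v j)) := by
  have hsplit : B v v = ∑ j, B (vj j) (correction P v j) +
      ∑ j, B (vj j) (v - partialError P j v) := by
    rw [← sum_add_distrib]
    nth_rewrite 1 [hv]
    rw [map_sum, LinearMap.sum_apply]
    refine sum_congr rfl fun j _ => ?_
    have horth : B (vj j) (partialError P j v - correction P v j) = 0 := by
      rw [← hBs.eq]
      exact (hP j).apply_sub_eq_zero _ _ (hvj j)
    rw [map_sub] at horth ⊢
    linarith
  have hnear := LinearMap.BilinForm.sum_apply_le_sqrt_mul_sqrt hB hBs univ vj (correction P v)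
  have hfar : ∑ j, B (vj j) (v - partialError P j v) ≤
      C * √(∑ j, B (vj j) (vj j)) * √(∑ j, B (correction P v j) (correction P v j)) :=
    (sum_le_sum fun j _ => apply_sub_partialError_le (vj j) v j.2.le).trans <|
      hint vj (correction P v) hvj fun j => (hP j).mem _
  linarith

theorem apply_self_le_mul_sum_apply_correction (hB : ∀ x, 0 ≤ B x x) (hBs : B.IsSymm)
    {C₁ C₂ : ℝ} (hC₁ : 0 ≤ C₁) (hP : ∀ j, IsOrthogonalProjection B (W j) (P j))
    (hstab : HasStableDecomposition B W C₁) (hint : HasLimitedInteraction B W C₂) (v : V) :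
    B v v ≤ C₁ * (1 + C₂) ^ 2 * ∑ j, B (correction P v j) (correction P v j) := by
  obtain ⟨vj, hvj, hv, hA⟩ := hstab v
  exact le_mul_sq_mul_of_le_mul_sqrt_mul_sqrt (sum_nonneg fun j _ => hB _)
    (sum_nonneg fun j _ => hB _) hC₁ hA
    (apply_self_le_one_add_mul_sqrt_mul_sqrt hB hBs hP hint hvj hv)

theorem apply_partialError_self_le (hB : ∀ x, 0 ≤ B x x) (hBs : B.IsSymm)
    {C₁ C₂ : ℝ} (hC₁ : 0 ≤ C₁) (hP : ∀ j, IsOrthogonalProjection B (W j) (P j))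
    (hstab : HasStableDecomposition B W C₁) (hint : HasLimitedInteraction B W C₂) (v : V) :
    B (partialError P N v) (partialError P N v) ≤
      C₁ * (1 + C₂) ^ 2 / (1 + C₁ * (1 + C₂) ^ 2) * B v v := by
  set K := C₁ * (1 + C₂) ^ 2
  have hK : 0 ≤ K := by positivity
  have henergy := sum_apply_correction hBs hP v
  have hkey := apply_self_le_mul_sum_apply_correction hB hBs hC₁ hP hstab hint v
  have hS : 0 ≤ ∑ j, B (correction P v j) (correction P v j) := sum_nonneg fun j _ => hB _
  rw [div_mul_eq_mul_div, le_div_iff₀ (by positivity)]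
  nlinarith

end Sweep

end MultiplicativeSchwarz

theorem stmt_10_general (C1 C2 : ℝ) (hC1 : 0 < C1) :
    ∃ δ : ℝ, 0 ≤ δ ∧ δ < 1 ∧
      ∀ (V : Type) [inst : NormedAddCommGroup V] [inst2 : InnerProductSpace ℝ V],
      FiniteDimensional ℝ V →
      ∀ (N : ℕ) (Vj : Fin N → Submodule ℝ V) (Λ : V →ₗ[ℝ] V),
      (∀ u v : V, (inner ℝ (Λ u) v : ℝ) = inner ℝ u (Λ v)) →
      (∀ v : V, v ≠ 0 → (0 : ℝ) < inner ℝ (Λ v) v) →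
      ∀ (P : Fin N → Module.End ℝ V),
      (∀ j v, P j v ∈ Vj j) →
      (∀ j (v : V), ∀ w ∈ Vj j, (inner ℝ (Λ (v - P j v)) w : ℝ) = 0) →
      -- stable decomposition
      (∀ v : V, ∃ vj : Fin N → V, (∀ j, vj j ∈ Vj j) ∧ v = ∑ j, vj j ∧
        ∑ j, (inner ℝ (Λ (vj j)) (vj j) : ℝ) ≤ C1 * inner ℝ (Λ v) v) →
      -- limited interaction
      (∀ vj wj : Fin N → V, (∀ j, vj j ∈ Vj j) → (∀ j, wj j ∈ Vj j) →
        ∑ j, ∑ m, |(inner ℝ (Λ (vj j)) (wj m) : ℝ)| ≤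
          C2 * Real.sqrt (∑ j, (inner ℝ (Λ (vj j)) (vj j) : ℝ)) *
            Real.sqrt (∑ m, (inner ℝ (Λ (wj m)) (wj m) : ℝ))) →
      ∀ E : Module.End ℝ V,
      E = ((List.ofFn (fun j : Fin N => (1 : Module.End ℝ V) - P j)).reverse).prod →
      ∀ v : V, (inner ℝ (Λ (E v)) (E v) : ℝ) ≤ δ * inner ℝ (Λ v) v := by
  refine ⟨C1 * (1 + C2) ^ 2 / (1 + C1 * (1 + C2) ^ 2), by positivity,
    (div_lt_one (by positivity)).2 (lt_one_add _), ?_⟩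
  intro V _ _ _ N Vj Λ hsym hpos P hPmem horth hstable hinter E hE v
  let B : LinearMap.BilinForm ℝ V := (innerₗ V).comp Λ
  have hB (x : V) : 0 ≤ B x x := by
    rcases eq_or_ne x 0 with rfl | hx
    · simp
    · exact (hpos x hx).le
  have hBs : B.IsSymm := ⟨fun x y => by simp [B, hsym x y, real_inner_comm]⟩
  rw [hE, ← MultiplicativeSchwarz.partialError_self]
  exact MultiplicativeSchwarz.apply_partialError_self_le hB hBs hC1.le
    (fun j => ⟨hPmem j, horth j⟩) hstable hinter v

/-- abstract multiplicative Schwarz convergence. Stable decomposition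
(constant C₁) and limited interaction (constant C₂) imply that the error operator
E = (I − P_N)⋯(I − P_1) of the multiplicative method satisfies
⟨ΛEv, Ev⟩ ≤ δ ⟨Λv, v⟩ with δ < 1 depending only on C₁ and C₂. -/
theorem stmt_10 (C1 C2 : ℝ) (hC1 : 0 < C1) (hC2 : 0 < C2) :
    ∃ δ : ℝ, 0 ≤ δ ∧ δ < 1 ∧
      ∀ (V : Type) [inst : NormedAddCommGroup V] [inst2 : InnerProductSpace ℝ V],
      FiniteDimensional ℝ V →
      ∀ (N : ℕ) (Vj : Fin N → Submodule ℝ V) (Λ : V →ₗ[ℝ] V),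
      (∀ u v : V, (inner ℝ (Λ u) v : ℝ) = inner ℝ u (Λ v)) →
      (∀ v : V, v ≠ 0 → (0 : ℝ) < inner ℝ (Λ v) v) →
      ∀ (P : Fin N → Module.End ℝ V),
      (∀ j v, P j v ∈ Vj j) →
      (∀ j (v : V), ∀ w ∈ Vj j, (inner ℝ (Λ (v - P j v)) w : ℝ) = 0) →
      -- stable decomposition
      (∀ v : V, ∃ vj : Fin N → V, (∀ j, vj j ∈ Vj j) ∧ v = ∑ j, vj j ∧
        ∑ j, (inner ℝ (Λ (vj j)) (vj j) : ℝ) ≤ C1 * inner ℝ (Λ v) v) →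
      -- limited interaction
      (∀ vj wj : Fin N → V, (∀ j, vj j ∈ Vj j) → (∀ j, wj j ∈ Vj j) →
        ∑ j, ∑ m, |(inner ℝ (Λ (vj j)) (wj m) : ℝ)| ≤
          C2 * Real.sqrt (∑ j, (inner ℝ (Λ (vj j)) (vj j) : ℝ)) *
            Real.sqrt (∑ m, (inner ℝ (Λ (wj m)) (wj m) : ℝ))) →
      ∀ E : Module.End ℝ V,
      E = ((List.ofFn (fun j : Fin N => (1 : Module.End ℝ V) - P j)).reverse).prod →
      ∀ v : V, (inner ℝ (Λ (E v)) (E v) : ℝ) ≤ δ * inner ℝ (Λ v) v :=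
  stmt_10_general C1 C2 hC1
end

section
/- In the setting of the abstract mixed problem above with f ∈ Q_h, let Π^S_h: Q → Q_h be the orthogonal projection. Let (ε_z, ε_p) and (ε_{z,h}, ε_{p,h}) solve the continuous and discrete mixed problems with data g = Π^S_h p − p_h ∈ Q_h. Then ‖Π^S_h p − p_h‖² = (z − z_h, ε_{z,h} − ε_z), and hence ‖Π^S_h p − p_h‖ ≤ ‖z − z_h‖ · ‖ε_z − ε_{z,h}‖ / ‖Π^S_h p − p_h‖ whenever Π^S_h p ≠ p_h; equivalently ‖Π^S_h p − p_h‖² ≤ ‖z − z_h‖ ‖ε_z − ε_{z,h}‖. -/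
/-!
Since `f ∈ Q_h`, the discrete flux has the exact divergence, so `z - z_h` is divergence free and
hence orthogonal to the continuous dual flux `ε_z`. Testing the Galerkin orthogonality of
`z - z_h` with the discrete dual flux `ε_{z,h}` gives `(div ε_{z,h}, p - p_h)`; as
`div ε_{z,h} ∈ Q_h`, `p` may be replaced by its projection, and the discrete dual equation
tested with `Π^S_h p - p_h` turns this into `‖Π^S_h p - p_h‖²`. Cauchy–Schwarz gives the bound.
-/

open scoped InnerProductSpace

section MixedMethod

variable {𝕜 H Q : Type*} [RCLike 𝕜] [NormedAddCommGroup H] [InnerProductSpace 𝕜 H]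
  [NormedAddCommGroup Q] [InnerProductSpace 𝕜 Q]

theorem Submodule.eq_of_forall_inner_eq {K : Submodule 𝕜 Q} {x y : Q} (hx : x ∈ K) (hy : y ∈ K)
    (h : ∀ s ∈ K, ⟪x, s⟫_𝕜 = ⟪y, s⟫_𝕜) : x = y := by
  rw [← sub_eq_zero, ← inner_self_eq_zero (𝕜 := 𝕜), inner_sub_left, h _ (K.sub_mem hx hy),
    sub_self]

theorem inner_sub_eq_inner_proj_sub {K : Submodule 𝕜 Q} {p Pp : Q}
    (hPp : ∀ s ∈ K, ⟪p - Pp, s⟫_𝕜 = 0) {s : Q} (hs : s ∈ K) (q : Q) :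
    ⟪s, p - q⟫_𝕜 = ⟪s, Pp - q⟫_𝕜 := by
  rw [← sub_add_sub_cancel p Pp q, inner_add_right, inner_eq_zero_symm.mp (hPp s hs), zero_add]

variable (dvg : H →L[𝕜] Q)

theorem inner_eq_zero_of_map_eq_zero {εz : H} {εp : Q}
    (he1 : ∀ w : H, ⟪εz, w⟫_𝕜 - ⟪dvg w, εp⟫_𝕜 = 0) {u : H} (hu : dvg u = 0) :
    ⟪u, εz⟫_𝕜 = 0 := by
  have := he1 u
  rw [hu, inner_zero_left, sub_zero] at this
  exact inner_eq_zero_symm.mp this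

theorem inner_sub_eq_inner_map_sub {Hh : Submodule 𝕜 H} {z zh : H} {p ph : Q}
    (hc1 : ∀ w : H, ⟪z, w⟫_𝕜 - ⟪dvg w, p⟫_𝕜 = 0)
    (hd1 : ∀ w ∈ Hh, ⟪zh, w⟫_𝕜 - ⟪dvg w, ph⟫_𝕜 = 0) {w : H} (hw : w ∈ Hh) :
    ⟪z - zh, w⟫_𝕜 = ⟪dvg w, p - ph⟫_𝕜 := by
  rw [inner_sub_left, inner_sub_right, sub_eq_zero.mp (hc1 w), sub_eq_zero.mp (hd1 w hw)]

end MixedMethod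

theorem stmt_13_general {H Q : Type*} [NormedAddCommGroup H] [InnerProductSpace ℝ H]
    [NormedAddCommGroup Q] [InnerProductSpace ℝ Q]
    (dvg : H →L[ℝ] Q) (Hh : Submodule ℝ H) (Qh : Submodule ℝ Q)
    (hdivsub : ∀ w ∈ Hh, dvg w ∈ Qh)
    (z : H) (p : Q) (zh : H) (ph : Q) (f : Q)
    (hzh : zh ∈ Hh) (hph : ph ∈ Qh) (hf : f ∈ Qh)
    (hc1 : ∀ w : H, (inner ℝ z w : ℝ) - inner ℝ (dvg w) p = 0)
    (hc2 : ∀ s : Q, (inner ℝ (dvg z) s : ℝ) = inner ℝ f s)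
    (hd1 : ∀ w ∈ Hh, (inner ℝ zh w : ℝ) - inner ℝ (dvg w) ph = 0)
    (hd2 : ∀ s ∈ Qh, (inner ℝ (dvg zh) s : ℝ) = inner ℝ f s)
    -- Π^S_h p : orthogonal projection of p onto Q_h
    (Pp : Q) (hPpmem : Pp ∈ Qh) (hPp : ∀ s ∈ Qh, (inner ℝ (p - Pp) s : ℝ) = 0)
    -- auxiliary continuous problem with data g = Pp − ph
    (εz : H) (εp : Q)
    (he1 : ∀ w : H, (inner ℝ εz w : ℝ) - inner ℝ (dvg w) εp = 0)
    -- auxiliary discrete problem with data g = Pp − ph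
    (εzh : H) (hεzh : εzh ∈ Hh)
    (he2h : ∀ s ∈ Qh, (inner ℝ (dvg εzh) s : ℝ) = inner ℝ (Pp - ph) s) :
    ‖Pp - ph‖ ^ 2 = (inner ℝ (z - zh) (εzh - εz) : ℝ) ∧
    ‖Pp - ph‖ ^ 2 ≤ ‖z - zh‖ * ‖εz - εzh‖ := by
  have hdiv : dvg (z - zh) = 0 := by
    rw [map_sub, ext_inner_right ℝ hc2, Submodule.eq_of_forall_inner_eq (hdivsub zh hzh) hf hd2,
      sub_self]
  have hcont : ⟪z - zh, εz⟫_ℝ = 0 := inner_eq_zero_of_map_eq_zero dvg he1 hdiv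
  have hdisc : ⟪z - zh, εzh⟫_ℝ = ‖Pp - ph‖ ^ 2 := by
    rw [inner_sub_eq_inner_map_sub dvg hc1 hd1 hεzh,
      inner_sub_eq_inner_proj_sub hPp (hdivsub εzh hεzh), he2h _ (Qh.sub_mem hPpmem hph),
      real_inner_self_eq_norm_sq]
  have key : ‖Pp - ph‖ ^ 2 = ⟪z - zh, εzh - εz⟫_ℝ := by
    rw [inner_sub_right, hcont, hdisc, sub_zero]
  refine ⟨key, key ▸ ?_⟩
  rw [norm_sub_rev εz]
  exact real_inner_le_norm _ _

/-- duality (Aubin–Nitsche) identity for the abstract mixed method: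
with g = Π^S_h p − p_h as data for the auxiliary continuous/discrete problems,
‖Π^S_h p − p_h‖² = (z − z_h, ε_{z,h} − ε_z) ≤ ‖z − z_h‖ ‖ε_z − ε_{z,h}‖. -/
theorem stmt_13 {H Q : Type*} [NormedAddCommGroup H] [InnerProductSpace ℝ H]
    [NormedAddCommGroup Q] [InnerProductSpace ℝ Q]
    (dvg : H →L[ℝ] Q) (Hh : Submodule ℝ H) (Qh : Submodule ℝ Q)
    (hdivsub : ∀ w ∈ Hh, dvg w ∈ Qh)
    (z : H) (p : Q) (zh : H) (ph : Q) (f : Q)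
    (hzh : zh ∈ Hh) (hph : ph ∈ Qh) (hf : f ∈ Qh)
    (hc1 : ∀ w : H, (inner ℝ z w : ℝ) - inner ℝ (dvg w) p = 0)
    (hc2 : ∀ s : Q, (inner ℝ (dvg z) s : ℝ) = inner ℝ f s)
    (hd1 : ∀ w ∈ Hh, (inner ℝ zh w : ℝ) - inner ℝ (dvg w) ph = 0)
    (hd2 : ∀ s ∈ Qh, (inner ℝ (dvg zh) s : ℝ) = inner ℝ f s)
    -- Π^S_h p : orthogonal projection of p onto Q_h
    (Pp : Q) (hPpmem : Pp ∈ Qh) (hPp : ∀ s ∈ Qh, (inner ℝ (p - Pp) s : ℝ) = 0)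
    -- auxiliary continuous problem with data g = Pp − ph
    (εz : H) (εp : Q)
    (he1 : ∀ w : H, (inner ℝ εz w : ℝ) - inner ℝ (dvg w) εp = 0)
    (he2 : ∀ s : Q, (inner ℝ (dvg εz) s : ℝ) = inner ℝ (Pp - ph) s)
    -- auxiliary discrete problem with data g = Pp − ph
    (εzh : H) (εph : Q) (hεzh : εzh ∈ Hh) (hεph : εph ∈ Qh)
    (he1h : ∀ w ∈ Hh, (inner ℝ εzh w : ℝ) - inner ℝ (dvg w) εph = 0)
    (he2h : ∀ s ∈ Qh, (inner ℝ (dvg εzh) s : ℝ) = inner ℝ (Pp - ph) s) :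
    ‖Pp - ph‖ ^ 2 = (inner ℝ (z - zh) (εzh - εz) : ℝ) ∧
    ‖Pp - ph‖ ^ 2 ≤ ‖z - zh‖ * ‖εz - εzh‖ :=
  stmt_13_general dvg Hh Qh hdivsub z p zh ph f hzh hph hf hc1 hc2 hd1 hd2 Pp hPpmem hPp εz εp he1
    εzh hεzh he2h
end
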